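/- arXiv:1901.02073 — 2 statements merged into one kernel-verified Lean document; each statement's English description precedes it below -/
import Mathlib

section
/- In Construction 1, the global code has the same degree and memory as the outer code: δ(C_glob) = δ(C_out) and μ(C_glob) = μ(C_out). -/
open Polynomial Matrix Finset

noncomputable section

namespace LRCC

variable {F : Type*} [Field F] {ι : Type*} [Fintype ι] {k : ℕ}

/-- Hamming weight of a vector: number of nonzero entries. -/
def hWt {α β : Type*} [Zero β] (v : α → β) : ℕ :=
  Nat.card {a // v a ≠ 0}

/-- `G` is a generator matrix of the convolutional code `C ⊆ F[D]^ι`: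
its rows are `F[D]`-linearly independent (full rank) and they span `C`. -/
def IsGenMat (C : Submodule (Polynomial F) (ι → Polynomial F))
    (G : Matrix (Fin k) ι (Polynomial F)) : Prop :=
  LinearIndependent (Polynomial F) (fun i => G i) ∧
    C = Submodule.span (Polynomial F) (Set.range fun i => G i)

/-- Degree of the `i`-th row of `G` (the maximum of the degrees of its entries). -/
def rowDeg (G : Matrix (Fin k) ι (Polynomial F)) (i : Fin k) : ℕ :=
  Finset.univ.sup fun j => (G i j).natDegree

/-- `G` is a reduced generator matrix of `C`: the sum of its row degrees is
minimum among all generator matrices of `C`. -/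
def IsRedGenMat (C : Submodule (Polynomial F) (ι → Polynomial F))
    (G : Matrix (Fin k) ι (Polynomial F)) : Prop :=
  IsGenMat C G ∧ ∀ G' : Matrix (Fin k) ι (Polynomial F), IsGenMat C G' →
    ∑ i, rowDeg G i ≤ ∑ i, rowDeg G' i

/-- `G` is a basic generator matrix of `C`: it has a polynomial right inverse. -/
def IsBasicGenMat (C : Submodule (Polynomial F) (ι → Polynomial F))
    (G : Matrix (Fin k) ι (Polynomial F)) : Prop :=
  IsGenMat C G ∧ ∃ Fi : Matrix ι (Fin k) (Polynomial F), G * Fi = 1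

/-- `C` is non-catastrophic: it admits a reduced and basic generator matrix. -/
def NonCatastrophic (C : Submodule (Polynomial F) (ι → Polynomial F)) (k : ℕ) : Prop :=
  ∃ G : Matrix (Fin k) ι (Polynomial F), IsRedGenMat C G ∧ IsBasicGenMat C G

/-- `C` is a convolutional code of rank `k` (a free submodule of rank `k`,
equivalently it admits a `k`-row generator matrix). -/
def IsConvCode (C : Submodule (Polynomial F) (ι → Polynomial F)) (k : ℕ) : Prop :=
  ∃ G : Matrix (Fin k) ι (Polynomial F), IsGenMat C G

/-- `h`-th coefficient matrix `G_h` of a polynomial matrix `G(D) = Σ_h G_h D^h`. -/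
def coeffMat (G : Matrix (Fin k) ι (Polynomial F)) (h : ℕ) : Matrix (Fin k) ι F :=
  fun i j => (G i j).coeff h

/-- `j`-th truncated sliding generator matrix `G_j^c`. -/
def slidingMat (G : Matrix (Fin k) ι (Polynomial F)) (j : ℕ) :
    Matrix (Fin (j + 1) × Fin k) (Fin (j + 1) × ι) F :=
  fun a b => if (a.1 : ℕ) ≤ (b.1 : ℕ) then (G a.2 b.2).coeff ((b.1 : ℕ) - (a.1 : ℕ)) else 0

/-- `j`-th column block code `C_j^c`. -/
def colBlockCode (G : Matrix (Fin k) ι (Polynomial F)) (j : ℕ) :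
    Set (Fin (j + 1) × ι → F) :=
  { v | ∃ u : Fin (j + 1) × Fin k → F, (fun i => u (0, i)) ≠ 0 ∧
      v = Matrix.vecMul u (slidingMat G j) }

/-- `j`-th column (Hamming) distance. -/
def colDist (G : Matrix (Fin k) ι (Polynomial F)) (j : ℕ) : ℕ :=
  sInf (hWt '' colBlockCode G j)

/-- Restriction of a convolutional code to a subset `Δ` of its coordinates. -/
def restrictCode (C : Submodule (Polynomial F) (ι → Polynomial F)) (Δ : Finset ι) :
    Submodule (Polynomial F) ({x // x ∈ Δ} → Polynomial F) :=
  C.map (LinearMap.funLeft (Polynomial F) (Polynomial F) Subtype.val)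

/-- Associated block code `C^0` of a convolutional code `C`
(the set of `j`-th coefficient vectors of codewords, for `j` large enough;
this union over all `j` equals `{v_μ : v(D) ∈ C}` for `μ` the memory of the code). -/
def assocBlockCode (C : Submodule (Polynomial F) (ι → Polynomial F)) : Set (ι → F) :=
  { w | ∃ v ∈ C, ∃ j : ℕ, ∀ i, w i = (v i).coeff j }

/-- `C` is an `(n, k, r, ∂)` locally repairable convolutional code with local
groups `Γ 1, ..., Γ g` covering all coordinates. -/
def IsLRCC (C : Submodule (Polynomial F) (ι → Polynomial F)) (k r d : ℕ)
    {g : ℕ} (Γ : Fin g → Finset ι) : Prop :=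
  IsConvCode C k ∧
  (∀ x : ι, ∃ a, x ∈ Γ a) ∧
  (∀ a, (Γ a).card ≤ r + d - 1) ∧
  (∀ a, ∀ w ∈ assocBlockCode (restrictCode C (Γ a)), w ≠ 0 → d ≤ hWt w)

/-- `C` is `j`-MDS: non-catastrophic with `j`-th column distance `(n−k)(j+1)+1`. -/
def IsjMDS (C : Submodule (Polynomial F) (ι → Polynomial F)) (k j : ℕ) : Prop :=
  NonCatastrophic C k ∧
  ∀ G : Matrix (Fin k) ι (Polynomial F), IsRedGenMat C G →
    colDist G j = (Fintype.card ι - k) * (j + 1) + 1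

/-- `C` is partial `j`-MDS with respect to local groups `Γ`. -/
def IsPartialjMDS [DecidableEq ι] (C : Submodule (Polynomial F) (ι → Polynomial F))
    (k r d : ℕ) {g : ℕ} (Γ : Fin g → Finset ι) (j : ℕ) : Prop :=
  ∀ Δ : Fin g → Finset ι, (∀ a, Δ a ⊆ Γ a) → (∀ a, (Γ a \ Δ a).card = d - 1) →
    IsjMDS (restrictCode C (Finset.univ.biUnion Δ)) k j

section SumRank

variable (Fq : Type*) [Field Fq] {Fqm : Type*} [Field Fqm] [Algebra Fq Fqm]

/-- Sum-rank weight of `c ∈ F_{q^m}^{gr}` (with respect to a basis `B` of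
`F_{q^m}` over `F_q`): the sum over the `g` blocks of the ranks of the
matrix representations of the blocks. -/
def srWt {m g r : ℕ} (B : Module.Basis (Fin m) Fq Fqm) (c : Fin g × Fin r → Fqm) : ℕ :=
  ∑ a : Fin g, (Matrix.of fun (i : Fin m) (j : Fin r) => B.repr (c (a, j)) i).rank

/-- Sum-rank weight of a window vector in `F_{q^m}^{(j+1)gr}`. -/
def srWtVec {m g r : ℕ} (B : Module.Basis (Fin m) Fq Fqm) {j : ℕ}
    (v : Fin (j + 1) × (Fin g × Fin r) → Fqm) : ℕ :=
  ∑ h : Fin (j + 1), srWt Fq B fun p => v (h, p)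

/-- `j`-th sum-rank column distance. -/
def srColDist {m g r k : ℕ} (B : Module.Basis (Fin m) Fq Fqm)
    (G : Matrix (Fin k) (Fin g × Fin r) (Polynomial Fqm)) (j : ℕ) : ℕ :=
  sInf (srWtVec Fq B '' colBlockCode G j)

/-- `C` is `j`-MSRD. -/
def IsjMSRD {m g r : ℕ} (B : Module.Basis (Fin m) Fq Fqm)
    (C : Submodule (Polynomial Fqm) (Fin g × Fin r → Polynomial Fqm)) (k j : ℕ) : Prop :=
  NonCatastrophic C k ∧
  ∀ G : Matrix (Fin k) (Fin g × Fin r) (Polynomial Fqm), IsRedGenMat C G →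
    srColDist Fq B G j = (g * r - k) * (j + 1) + 1

/-- The block-diagonal matrix `diag_g(A)`, with `g` diagonal copies of `A`,
viewed over the polynomial ring `F_{q^m}[D]`. -/
def diagMap (g : ℕ) {r s : ℕ} (A : Matrix (Fin r) (Fin s) Fq) :
    Matrix (Fin g × Fin r) (Fin g × Fin s) (Polynomial Fqm) :=
  fun p q => if p.1 = q.1 then Polynomial.C (algebraMap Fq Fqm (A p.2 q.2)) else 0

/-- The global code of Construction 1: `C_glob = { v(D) diag_g(A) : v(D) ∈ C_out }`. -/
def globCode {g r s : ℕ}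
    (Cout : Submodule (Polynomial Fqm) (Fin g × Fin r → Polynomial Fqm))
    (A : Matrix (Fin r) (Fin s) Fq) :
    Submodule (Polynomial Fqm) (Fin g × Fin s → Polynomial Fqm) :=
  Cout.map (Matrix.vecMulLinear (diagMap (Fqm := Fqm) Fq g A))

end SumRank

end LRCC

/-!
Write `M = diag_g(A)`. As `A` has linearly independent rows it has a right inverse `B`, and
`N = diag_g(B)` satisfies `M N = 1`. Both have constant entries, so `v ↦ v M` preserves the degree
of vectors, and `G ↦ G N` turns a reduced generator matrix of `C_glob` into one of `C_out` with the
same row degrees. This gives `δ(C_glob) = δ(C_out)` at once.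

For the memory one needs that the largest row degree is the same for all reduced generator
matrices. Let `eᵢ` be the degree of the row `gᵢ` of `G` and `ℓᵢ ∈ F^n` the coefficient of `D^{eᵢ}`
in `gᵢ`. If `G` is reduced, the `ℓᵢ` are linearly independent: a dependency `∑ cᵢ ℓᵢ = 0` lets one
replace the row `g_{i₀}` of largest degree in it by `∑ cᵢ D^{e_{i₀} - eᵢ} gᵢ`, which has smaller
degree, and this row operation is invertible. Independence of the `ℓᵢ` gives the predictable degree
property, so a codeword of degree `< e_{i₀}` is a combination of rows of `G` not involving `g_{i₀}`.
Hence the rows of a generator matrix with all row degrees `< e_{i₀}` could not span the code.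
-/

namespace LRCC

variable {F : Type*} [Field F] {ι : Type*} {k : ℕ}

section GeneratorMatrix

variable {C : Submodule F[X] (ι → F[X])} {G : Matrix (Fin k) ι F[X]}

theorem isGenMat_iff :
    IsGenMat C G ↔ Function.Injective G.vecMul ∧ C = LinearMap.range G.vecMulLinear := by
  rw [IsGenMat, vecMul_injective_iff, range_vecMulLinear]
  rfl

theorem IsGenMat.mul_left {U : Matrix (Fin k) (Fin k) F[X]} (hG : IsGenMat C G) (hU : IsUnit U) :
    IsGenMat C (U * G) := by
  have hcomp : (U * G).vecMulLinear = G.vecMulLinear ∘ₗ U.vecMulLinear :=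
    LinearMap.ext fun v => (vecMul_vecMul v U G).symm
  rw [isGenMat_iff] at hG ⊢
  refine ⟨?_, ?_⟩
  · rw [← coe_vecMulLinear, hcomp, LinearMap.coe_comp]
    exact hG.1.comp (vecMul_injective_of_isUnit hU)
  · rw [hcomp, LinearMap.range_comp_of_range_eq_top _
      (LinearMap.range_eq_top.mpr (vecMul_surjective_iff_isUnit.mpr hU)), hG.2]

theorem IsGenMat.updateRow_sum (hG : IsGenMat C G) {q : Fin k → F[X]} {i₀ : Fin k}
    (hq : IsUnit (q i₀)) : IsGenMat C (G.updateRow i₀ (∑ i, q i • G i)) := by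
  have hU : IsUnit ((1 : Matrix (Fin k) (Fin k) F[X]).updateRow i₀ q) := by
    have := det_updateRow_sum (1 : Matrix (Fin k) (Fin k) F[X]) i₀ q
    rw [← vecMul_eq_sum, vecMul_one, det_one, smul_eq_mul, mul_one] at this
    rwa [isUnit_iff_isUnit_det, this]
  simpa [updateRow_mul, vecMul_eq_sum] using hG.mul_left hU

end GeneratorMatrix

section RowDegree

variable [Fintype ι]

def vecDeg (v : ι → F[X]) : ℕ :=
  univ.sup fun a => (v a).natDegree

theorem rowDeg_eq_vecDeg (G : Matrix (Fin k) ι F[X]) (i : Fin k) : rowDeg G i = vecDeg (G i) :=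
  rfl

theorem natDegree_le_vecDeg (v : ι → F[X]) (a : ι) : (v a).natDegree ≤ vecDeg v :=
  le_sup (f := fun a => (v a).natDegree) (mem_univ a)

theorem vecDeg_vecMul_le {κ : Type*} [Fintype κ] {M : Matrix ι κ F[X]}
    (hM : ∀ a b, (M a b).natDegree = 0) (v : ι → F[X]) : vecDeg (v ᵥ* M) ≤ vecDeg v := by
  refine Finset.sup_le fun b _ => ?_
  rw [vecMul, dotProduct]
  refine natDegree_sum_le_of_forall_le _ _ fun a _ => natDegree_mul_le.trans ?_
  rw [hM, add_zero]
  exact natDegree_le_vecDeg v a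

theorem vecDeg_lt {v : ι → F[X]} {n : ℕ} (hv : v ≠ 0) (hdeg : ∀ a, (v a).natDegree ≤ n)
    (hcoeff : ∀ a, (v a).coeff n = 0) : vecDeg v < n := by
  have hlt : ∀ a, v a ≠ 0 → (v a).natDegree < n := fun a ha =>
    (hdeg a).lt_of_ne fun h =>
      ha (leadingCoeff_eq_zero.mp (by rw [leadingCoeff, h]; exact hcoeff a))
  obtain ⟨a₀, ha₀⟩ := Function.ne_iff.mp hv
  have hn : 0 < n := (Nat.zero_le _).trans_lt (hlt a₀ ha₀)
  refine (Finset.sup_lt_iff (by simpa using hn)).mpr fun a _ => ?_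
  by_cases ha : v a = 0
  · simpa [ha] using hn
  · exact hlt a ha

end RowDegree

section RightInvertibleMap

variable [Fintype ι] [DecidableEq ι] {κ : Type*} [Fintype κ]
  {M : Matrix ι κ F[X]} {N : Matrix κ ι F[X]}

theorem vecMul_injective_of_mul_eq_one (hMN : M * N = 1) : Function.Injective M.vecMul :=
  Function.LeftInverse.injective (g := N.vecMul) fun v => by
    simp only [vecMul_vecMul, hMN, vecMul_one]

theorem isGenMat_map_iff (hMN : M * N = 1) {C : Submodule F[X] (ι → F[X])}
    {G : Matrix (Fin k) ι F[X]} :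
    IsGenMat (C.map M.vecMulLinear) (G * M) ↔ IsGenMat C G := by
  have hM := vecMul_injective_of_mul_eq_one hMN
  have hcomp : (G * M).vecMulLinear = M.vecMulLinear ∘ₗ G.vecMulLinear :=
    LinearMap.ext fun v => (vecMul_vecMul v G M).symm
  rw [isGenMat_iff, isGenMat_iff, ← coe_vecMulLinear, hcomp, LinearMap.coe_comp,
    LinearMap.range_comp, (Submodule.map_injective_of_injective hM).eq_iff]
  exact and_congr_left' (hM.of_comp_iff _)

theorem IsGenMat.mul_mul_eq_self (hMN : M * N = 1) {C : Submodule F[X] (ι → F[X])}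
    {G : Matrix (Fin k) κ F[X]} (hG : IsGenMat (C.map M.vecMulLinear) G) : G * N * M = G := by
  funext i
  have hi : G i ∈ C.map M.vecMulLinear := hG.2 ▸ Submodule.subset_span ⟨i, rfl⟩
  obtain ⟨w, -, hw⟩ := Submodule.mem_map.mp hi
  rw [Matrix.mul_assoc, mul_apply_eq_vecMul, ← hw, vecMulLinear_apply, vecMul_vecMul,
    ← Matrix.mul_assoc, hMN, Matrix.one_mul]

theorem rowDeg_mul_of_mul_eq_one (hMN : M * N = 1) (hM : ∀ a b, (M a b).natDegree = 0)
    (hN : ∀ a b, (N a b).natDegree = 0) (G : Matrix (Fin k) ι F[X]) :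
    rowDeg (G * M) = rowDeg G := by
  funext i
  refine (vecDeg_vecMul_le hM (G i)).antisymm ?_
  calc rowDeg G i = vecDeg (G i ᵥ* M ᵥ* N) := by rw [vecMul_vecMul, hMN, vecMul_one]; rfl
    _ ≤ rowDeg (G * M) i := vecDeg_vecMul_le hN _

theorem IsRedGenMat.exists_rowDeg_eq_of_map (hMN : M * N = 1) (hM : ∀ a b, (M a b).natDegree = 0)
    (hN : ∀ a b, (N a b).natDegree = 0) {C : Submodule F[X] (ι → F[X])}
    {G : Matrix (Fin k) κ F[X]} (hG : IsRedGenMat (C.map M.vecMulLinear) G) :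
    ∃ G' : Matrix (Fin k) ι F[X], IsRedGenMat C G' ∧ rowDeg G' = rowDeg G := by
  have hGNM := hG.1.mul_mul_eq_self hMN
  have hdeg := rowDeg_mul_of_mul_eq_one (k := k) hMN hM hN
  have hGN : rowDeg (G * N) = rowDeg G := by rw [← hdeg, hGNM]
  refine ⟨G * N, ⟨(isGenMat_map_iff hMN).mp (by rw [hGNM]; exact hG.1), fun G' hG' => ?_⟩, hGN⟩
  simpa only [hGN, hdeg] using hG.2 (G' * M) ((isGenMat_map_iff hMN).mpr hG')

end RightInvertibleMap

section Reduced

open Submodule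

variable [Fintype ι]

def rowLeadCoeff (G : Matrix (Fin k) ι F[X]) (i : Fin k) : ι → F :=
  fun a => (G i a).coeff (rowDeg G i)

section LeadingCoefficients

variable (G : Matrix (Fin k) ι F[X]) {q : Fin k → F[X]} {T : ℕ}

theorem natDegree_sum_smul_le (hq : ∀ i, q i ≠ 0 → (q i).natDegree + rowDeg G i ≤ T) (a : ι) :
    ((∑ i, q i • G i) a).natDegree ≤ T := by
  rw [Finset.sum_apply]
  refine natDegree_sum_le_of_forall_le _ _ fun i _ => ?_
  by_cases hqi : q i = 0
  · simp [hqi]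
  · exact natDegree_mul_le.trans ((add_le_add le_rfl (natDegree_le_vecDeg _ a)).trans (hq i hqi))

theorem coeff_sum_smul (hq : ∀ i, q i ≠ 0 → (q i).natDegree + rowDeg G i ≤ T) :
    (fun a => ((∑ i, q i • G i) a).coeff T)
      = ∑ i, (q i).coeff (T - rowDeg G i) • rowLeadCoeff G i := by
  funext a
  simp only [Finset.sum_apply, finsetSum_coeff, Pi.smul_apply, smul_eq_mul]
  refine Finset.sum_congr rfl fun i _ => ?_
  by_cases hqi : q i = 0
  · simp [hqi]
  have hi := hq i hqi
  have := coeff_mul_add_eq_of_natDegree_le (f := q i) (df := T - rowDeg G i) (by omega)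
    (natDegree_le_vecDeg (G i) a)
  rwa [← rowDeg_eq_vecDeg, Nat.sub_add_cancel (by omega)] at this

end LeadingCoefficients

variable {C : Submodule F[X] (ι → F[X])} {G G' : Matrix (Fin k) ι F[X]}

theorem IsRedGenMat.linearIndependent_rowLeadCoeff (hG : IsRedGenMat C G) :
    LinearIndependent F (rowLeadCoeff G) := by
  classical
  rw [Fintype.linearIndependent_iff]
  by_contra! ⟨c, hc, i₁, hi₁⟩
  obtain ⟨i₀, hi₀, hmax⟩ := (univ.filter (c · ≠ 0)).exists_max_image (rowDeg G)
    ⟨i₁, by simpa using hi₁⟩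
  simp only [mem_filter, mem_univ, true_and] at hi₀ hmax
  set q : Fin k → F[X] := fun i => Polynomial.C (c i) * X ^ (rowDeg G i₀ - rowDeg G i)
  have hq : ∀ i, q i ≠ 0 → (q i).natDegree + rowDeg G i ≤ rowDeg G i₀ := fun i hi => by
    have hci : c i ≠ 0 := fun h => hi (by simp [q, h])
    have := hmax i hci
    rw [natDegree_C_mul_X_pow _ _ hci]
    omega
  set w := ∑ i, q i • G i
  have hgen : IsGenMat C (G.updateRow i₀ w) := hG.1.updateRow_sum (by simpa [q] using hi₀)
  have hw : w ≠ 0 := by simpa using hgen.1.ne_zero i₀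
  have hwcoeff : (fun a => (w a).coeff (rowDeg G i₀)) = 0 := by
    rw [coeff_sum_smul G hq, ← hc]
    simp [q]
  have hlt : vecDeg w < rowDeg G i₀ := vecDeg_lt hw (natDegree_sum_smul_le G hq) (congrFun hwcoeff)
  have hsum : ∑ i, rowDeg (G.updateRow i₀ w) i < ∑ i, rowDeg G i := by
    refine Finset.sum_lt_sum (fun i _ => ?_) ⟨i₀, mem_univ _, by simpa [rowDeg_eq_vecDeg] using hlt⟩
    rcases eq_or_ne i i₀ with rfl | hi
    · simpa [rowDeg_eq_vecDeg] using hlt.le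
    · simp [rowDeg_eq_vecDeg, hi]
  exact (hG.2 _ hgen).not_gt hsum

-- the predictable degree property
theorem natDegree_add_rowDeg_le_vecDeg (hG : LinearIndependent F (rowLeadCoeff G))
    (u : Fin k → F[X]) {i : Fin k} (hi : u i ≠ 0) :
    (u i).natDegree + rowDeg G i ≤ vecDeg (∑ j, u j • G j) := by
  classical
  obtain ⟨i₀, hi₀, hmax⟩ := (univ.filter (u · ≠ 0)).exists_max_image
    (fun j => (u j).natDegree + rowDeg G j) ⟨i, by simpa using hi⟩
  simp only [mem_filter, mem_univ, true_and] at hi₀ hmax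
  obtain ⟨a, ha⟩ : ∃ a, ((∑ j, u j • G j) a).coeff ((u i₀).natDegree + rowDeg G i₀) ≠ 0 := by
    by_contra! h
    have hsum := (coeff_sum_smul G hmax).symm.trans (funext h)
    have := Fintype.linearIndependent_iff.mp hG _ hsum i₀
    exact hi₀ (leadingCoeff_eq_zero.mp (by simpa using this))
  calc (u i).natDegree + rowDeg G i ≤ (u i₀).natDegree + rowDeg G i₀ := hmax i hi
    _ ≤ ((∑ j, u j • G j) a).natDegree := le_natDegree_of_ne_zero ha
    _ ≤ vecDeg (∑ j, u j • G j) := natDegree_le_vecDeg _ a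

theorem IsRedGenMat.sup_rowDeg_le (hG : IsRedGenMat C G) (hG' : IsGenMat C G') :
    univ.sup (rowDeg G) ≤ univ.sup (rowDeg G') := by
  refine Finset.sup_le fun i₀ _ => ?_
  by_contra! hlt
  have hrows : ∀ l, G' l ∈ span F[X] (G '' {i₀}ᶜ) := fun l => by
    have hl : G' l ∈ span F[X] (Set.range fun i => G i) := by
      rw [← hG.1.2, hG'.2]
      exact subset_span ⟨l, rfl⟩
    obtain ⟨u, hu⟩ := (mem_span_range_iff_exists_fun F[X]).mp hl
    have hu₀ : u i₀ = 0 := by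
      by_contra h
      have h₁ := natDegree_add_rowDeg_le_vecDeg hG.linearIndependent_rowLeadCoeff u h
      have h₂ : vecDeg (G' l) ≤ univ.sup (rowDeg G') := le_sup (f := rowDeg G') (mem_univ l)
      rw [hu] at h₁
      omega
    rw [← hu]
    refine Submodule.sum_mem _ fun i _ => ?_
    rcases eq_or_ne i i₀ with rfl | hi
    · simp [hu₀]
    · exact Submodule.smul_mem _ _ (subset_span ⟨i, hi, rfl⟩)
  have hG₀ : G i₀ ∈ span F[X] (Set.range fun l => G' l) := by
    rw [← hG'.2, hG.1.2]
    exact subset_span ⟨i₀, rfl⟩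
  refine hG.1.1.notMem_span_image (s := {i₀}ᶜ) (x := i₀) (by simp) ?_
  exact span_le.mpr (Set.range_subset_iff.mpr hrows) hG₀

theorem IsRedGenMat.sum_rowDeg_eq (hG : IsRedGenMat C G) (hG' : IsRedGenMat C G') :
    ∑ i, rowDeg G i = ∑ i, rowDeg G' i :=
  (hG.2 G' hG'.1).antisymm (hG'.2 G hG.1)

theorem IsRedGenMat.sup_rowDeg_eq (hG : IsRedGenMat C G) (hG' : IsRedGenMat C G') :
    univ.sup (rowDeg G) = univ.sup (rowDeg G') :=
  (hG.sup_rowDeg_le hG'.1).antisymm (hG'.sup_rowDeg_le hG.1)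

end Reduced

theorem exists_mul_eq_one_of_linearIndependent_rows {K : Type*} [Field K] {m n : Type*}
    [Fintype m] [DecidableEq m] [Fintype n] [DecidableEq n] {A : Matrix m n K}
    (hA : LinearIndependent K A.row) : ∃ B : Matrix n m K, A * B = 1 := by
  obtain ⟨L, hL⟩ := A.vecMulLinear.exists_leftInverse_of_injective
    (LinearMap.ker_eq_bot.mpr (vecMul_injective_iff.mpr hA))
  refine ⟨(LinearMap.toMatrix' L)ᵀ, vecMul_injective (funext fun v => ?_)⟩
  simpa [← vecMul_vecMul, vecMul_transpose] using LinearMap.congr_fun hL v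

section BlockDiagonal

variable (Fq : Type*) [Field Fq] {Fqm : Type*} [Field Fqm] [Algebra Fq Fqm] {g r s : ℕ}

theorem diagMap_eq_blockDiagonal (A : Matrix (Fin r) (Fin s) Fq) :
    diagMap (Fqm := Fqm) Fq g A
      = (blockDiagonal fun _ : Fin g => A.map (algebraMap Fq Fqm[X])).submatrix
          (Equiv.prodComm _ _) (Equiv.prodComm _ _) := by
  ext ⟨b, i⟩ ⟨b', i'⟩
  simp [diagMap, blockDiagonal_apply]

theorem diagMap_mul_diagMap_eq_one {A : Matrix (Fin r) (Fin s) Fq} {B : Matrix (Fin s) (Fin r) Fq}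
    (hAB : A * B = 1) : diagMap (Fqm := Fqm) Fq g A * diagMap (Fqm := Fqm) Fq g B = 1 := by
  rw [diagMap_eq_blockDiagonal, diagMap_eq_blockDiagonal, submatrix_mul_equiv, ← blockDiagonal_mul,
    ← Matrix.map_mul, hAB, Matrix.map_one _ (map_zero _) (map_one _)]
  exact (congrArg (submatrix · _ _) blockDiagonal_one).trans (submatrix_one_equiv _)

theorem natDegree_diagMap (A : Matrix (Fin r) (Fin s) Fq) (x : Fin g × Fin r) (y : Fin g × Fin s) :
    (diagMap (Fqm := Fqm) Fq g A x y).natDegree = 0 := by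
  unfold diagMap
  split_ifs <;> simp

end BlockDiagonal

theorem statement13_general {Fq : Type*} [Field Fq]
    {Fqm : Type*} [Field Fqm] [Algebra Fq Fqm]
    {g r d k : ℕ}
    (Cout : Submodule (Polynomial Fqm) (Fin g × Fin r → Polynomial Fqm))
    (A : Matrix (Fin r) (Fin (r + d - 1)) Fq)
    (hA1 : LinearIndependent Fq (fun i => A i)) :
    ∀ (Go : Matrix (Fin k) (Fin g × Fin r) (Polynomial Fqm))
      (Gg : Matrix (Fin k) (Fin g × Fin (r + d - 1)) (Polynomial Fqm)),
      IsRedGenMat Cout Go → IsRedGenMat (globCode Fq Cout A) Gg →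
      (∑ i, rowDeg Go i = ∑ i, rowDeg Gg i) ∧
      (Finset.univ.sup (rowDeg Go) = Finset.univ.sup (rowDeg Gg)) := by
  intro Go Gg hGo hGg
  obtain ⟨B, hAB⟩ := exists_mul_eq_one_of_linearIndependent_rows hA1
  obtain ⟨G, hG, hdeg⟩ := hGg.exists_rowDeg_eq_of_map (diagMap_mul_diagMap_eq_one Fq hAB)
    (natDegree_diagMap Fq A) (natDegree_diagMap Fq B)
  rw [← hdeg]
  exact ⟨hGo.sum_rowDeg_eq hG, hGo.sup_rowDeg_eq hG⟩

theorem statement13 {Fq : Type*} [Field Fq] [Fintype Fq]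
    {Fqm : Type*} [Field Fqm] [Algebra Fq Fqm]
    {g r d k : ℕ} (hg : 0 < g) (hr : 0 < r) (hd : 0 < d)
    (hq : r + d - 1 ≤ Fintype.card Fq)
    (Cout : Submodule (Polynomial Fqm) (Fin g × Fin r → Polynomial Fqm))
    (hout : IsConvCode Cout k)
    (A : Matrix (Fin r) (Fin (r + d - 1)) Fq)
    (hA1 : LinearIndependent Fq (fun i => A i))
    (hA2 : ∀ u : Fin r → Fq, u ≠ 0 → d ≤ hWt (Matrix.vecMul u A)) :
    ∀ (Go : Matrix (Fin k) (Fin g × Fin r) (Polynomial Fqm))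
      (Gg : Matrix (Fin k) (Fin g × Fin (r + d - 1)) (Polynomial Fqm)),
      IsRedGenMat Cout Go → IsRedGenMat (globCode Fq Cout A) Gg →
      (∑ i, rowDeg Go i = ∑ i, rowDeg Gg i) ∧
      (Finset.univ.sup (rowDeg Go) = Finset.univ.sup (rowDeg Gg)) :=
  statement13_general Cout A hA1

end LRCC
end
end

section
/- Let F be a finite field, ∂ ≥ 2, and let C_0 ⊆ F^n be a k-dimensional linear block code (k ≥ 1) whose coordinate set {1,...,n} is partitioned into pairwise disjoint local groups Γ_1,...,Γ_g, each of size exactly r+∂−1, such that every nonzero codeword of the restriction (C_0)_{Γ_i} has Hamming weight at least ∂ for each i = 1,...,g. Let ℓ = ⌈k/r⌉ and assume the minimum Hamming distance of C_0 equals (n−k) − (ℓ−1)(∂−1) + 1. Then there exist ℓ indices i_1 < i_2 < ... < i_ℓ in {1,...,g} such that the restriction of C_0 to Γ_{i_1} ∪ Γ_{i_2} ∪ ... ∪ Γ_{i_ℓ} has dimension k (equivalently, the projection of C_0 onto these coordinates is injective). -/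
/-!
A nonzero codeword vanishing on `ℓ` local groups has weight at most `n - ℓ (r + ∂ - 1)`, which is
less than the minimum distance `D` because `ℓ r ≥ k` and `∂ ≥ 1`. So any `ℓ` local groups
work; there are that many because `n ≤ g (r + ∂ - 1)` and `D ≥ 1`.
-/

open Polynomial Matrix Finset

noncomputable section

namespace LRCC

variable {F : Type*} [Field F] {ι : Type*} [Fintype ι] {k : ℕ}

theorem hWt_pos {α β : Type*} [Zero β] [Finite α] {v : α → β} (hv : v ≠ 0) : 0 < hWt v := by
  obtain ⟨x, hx⟩ := Function.ne_iff.mp hv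
  have : Nonempty {a // v a ≠ 0} := ⟨⟨x, hx⟩⟩
  exact Nat.card_pos

theorem hWt_le_card_sub_card {β : Type*} [Zero β] {v : ι → β} {S : Finset ι}
    (hS : ∀ x ∈ S, v x = 0) : hWt v ≤ Fintype.card ι - S.card := by
  classical
  calc hWt v = #{x | v x ≠ 0} := by
        rw [hWt, Nat.card_eq_fintype_card, Fintype.card_subtype]
    _ ≤ #Sᶜ := card_le_card fun x hx => mem_compl.mpr fun hxS => (mem_filter.mp hx).2 (hS x hxS)
    _ = Fintype.card ι - S.card := card_compl S

theorem eq_zero_of_eq_zero_on_of_card_sub_lt {β : Type*} [Zero β] {C : Set (ι → β)} {D : ℕ}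
    (hD : D ∈ lowerBounds {w | ∃ v ∈ C, v ≠ 0 ∧ hWt v = w}) {S : Finset ι}
    (hS : Fintype.card ι - S.card < D) {v : ι → β} (hv : v ∈ C) (hvS : ∀ x ∈ S, v x = 0) :
    v = 0 := by
  by_contra hne
  exact (hD ⟨v, hv, hne, rfl⟩).not_gt ((hWt_le_card_sub_card hvS).trans_lt hS)

theorem card_biUnion_of_card_eq {α β : Type*} [DecidableEq β] {s : Finset α} {t : α → Finset β}
    {m : ℕ} (hst : (s : Set α).PairwiseDisjoint t) (ht : ∀ a ∈ s, #(t a) = m) :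
    #(s.biUnion t) = #s * m := by
  rw [card_biUnion hst, sum_const_nat ht]

theorem statement16_general {F : Type*} [Field F]
    {n k r d g D : ℕ} (hd : 2 ≤ d) (hr : 0 < r)
    (C0 : Submodule F (Fin n → F))
    (Γ : Fin g → Finset (Fin n))
    (hcover : ∀ x : Fin n, ∃ a, x ∈ Γ a)
    (hdisj : ∀ a b, a ≠ b → Disjoint (Γ a) (Γ b))
    (hsize : ∀ a, (Γ a).card = r + d - 1)
    (hD : (D : ℤ) = ((n : ℤ) - k) - ((((k + r - 1) / r : ℕ) : ℤ) - 1) * ((d : ℤ) - 1) + 1)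
    (hdist : IsLeast {w : ℕ | ∃ v ∈ C0, v ≠ 0 ∧ hWt v = w} D) :
    ∃ e : Fin ((k + r - 1) / r) → Fin g, Function.Injective e ∧
      ∀ v ∈ C0, (∀ x : Fin n, (∃ t, x ∈ Γ (e t)) → v x = 0) → v = 0 := by
  set ℓ := (k + r - 1) / r
  obtain ⟨⟨v₀, -, hv₀, rfl⟩, hmin⟩ := hdist
  have hD_pos := hWt_pos hv₀
  have hcov : univ.biUnion Γ = univ := eq_univ_of_forall fun x => by simpa using hcover x
  have hn : n ≤ g * (r + d - 1) := by
    simpa [hcov] using card_biUnion_le_card_mul univ Γ _ fun a _ => (hsize a).le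
  have hkℓ : k ≤ r * ℓ := le_smul_ceilDiv (b := k) hr
  have hℓk : r * ℓ ≤ k + r - 1 := Nat.mul_div_le _ _
  zify [show 1 ≤ k + r by omega, show 1 ≤ r + d by omega] at hn hkℓ hℓk hD_pos
  have hℓg : ℓ ≤ g := by
    by_contra! h
    nlinarith [mul_le_mul_of_nonneg_right (show (g : ℤ) ≤ ℓ - 1 by omega)
      (show (0 : ℤ) ≤ r + d - 1 by omega)]
  refine ⟨Fin.castLE hℓg, Fin.castLE_injective hℓg, fun v hv hvS => ?_⟩
  have hS : #(univ.biUnion (Γ ∘ Fin.castLE hℓg)) = ℓ * (r + d - 1) := by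
    simpa using card_biUnion_of_card_eq (s := univ) (t := Γ ∘ Fin.castLE hℓg)
      (fun a _ b _ hab => hdisj _ _ ((Fin.castLE_injective hℓg).ne hab)) fun a _ => hsize _
  refine eq_zero_of_eq_zero_on_of_card_sub_lt hmin (S := univ.biUnion (Γ ∘ Fin.castLE hℓg)) ?_ hv
    fun x hx => hvS x (by simpa using hx)
  have hlt : n < hWt v₀ + ℓ * (r + d - 1) := by
    zify [show 1 ≤ r + d by omega]
    nlinarith
  rw [hS, Fintype.card_fin]
  omega

theorem statement16 {F : Type*} [Field F] [Fintype F] [DecidableEq F]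
    {n k r d g D : ℕ} (hd : 2 ≤ d) (hk : 1 ≤ k) (hr : 0 < r)
    (C0 : Submodule F (Fin n → F)) (hdim : Module.finrank F C0 = k)
    (Γ : Fin g → Finset (Fin n))
    (hcover : ∀ x : Fin n, ∃ a, x ∈ Γ a)
    (hdisj : ∀ a b, a ≠ b → Disjoint (Γ a) (Γ b))
    (hsize : ∀ a, (Γ a).card = r + d - 1)
    (hloc : ∀ a, ∀ v ∈ C0, (∃ x ∈ Γ a, v x ≠ 0) →
      d ≤ ((Γ a).filter fun x => v x ≠ 0).card)
    (hD : (D : ℤ) = ((n : ℤ) - k) - ((((k + r - 1) / r : ℕ) : ℤ) - 1) * ((d : ℤ) - 1) + 1)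
    (hdist : IsLeast {w : ℕ | ∃ v ∈ C0, v ≠ 0 ∧ hWt v = w} D) :
    ∃ e : Fin ((k + r - 1) / r) → Fin g, Function.Injective e ∧
      ∀ v ∈ C0, (∀ x : Fin n, (∃ t, x ∈ Γ (e t)) → v x = 0) → v = 0 :=
  statement16_general hd hr C0 Γ hcover hdisj hsize hD hdist

end LRCC
end
end
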